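/- arXiv:0805.0639 — 5 statements merged into one kernel-verified Lean document; each statement's English description precedes it below -/
import Mathlib

section
/- Let J be a symmetric 3×3 real matrix and let J_d = (1/2)tr(J)·I − J. Then for all vectors x, y ∈ ℝ³, x × (J_d y) + J_d (x × y) = (J x) × y; equivalently, as matrices, S_x J_d + J_d S_x = S_{Jx}. -/
open Matrix

/-- The hat map: `hat x` is the skew-symmetric matrix with `(hat x) *ᵥ y = x ×₃ y`. -/
def hat (x : Fin 3 → ℝ) : Matrix (Fin 3) (Fin 3) ℝ :=
  !![0, -x 2, x 1; x 2, 0, -x 0; -x 1, x 0, 0]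

theorem hat_mulVec (x y : Fin 3 → ℝ) : hat x *ᵥ y = x ⨯₃ y := by
  ext i
  fin_cases i <;> simp [hat, cross_apply, mulVec, dotProduct, Fin.sum_univ_three] <;> ring

-- Linearization at `M = 1` of the cofactor identity `(M x) ⨯₃ (M y) = adj(M)ᵀ *ᵥ (x ⨯₃ y)`.
theorem mulVec_cross_add_cross_mulVec {R : Type*} [CommRing R] (M : Matrix (Fin 3) (Fin 3) R)
    (x y : Fin 3 → R) :
    (M *ᵥ x) ⨯₃ y + x ⨯₃ (M *ᵥ y) = M.trace • (x ⨯₃ y) - Mᵀ *ᵥ (x ⨯₃ y) := by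
  ext i
  fin_cases i <;>
    simp [cross_apply, mulVec, dotProduct, trace, Fin.sum_univ_three] <;> ring

theorem cross_mulVec_add_mulVec_cross_of_transpose_eq {R : Type*} [Field R] [CharZero R]
    {J : Matrix (Fin 3) (Fin 3) R} (hJ : Jᵀ = J) (x y : Fin 3 → R) :
    x ⨯₃ (((1 / 2 * J.trace) • 1 - J) *ᵥ y) + ((1 / 2 * J.trace) • 1 - J) *ᵥ (x ⨯₃ y)
      = (J *ᵥ x) ⨯₃ y := by
  have h := mulVec_cross_add_cross_mulVec J x y
  rw [hJ] at h
  rw [sub_mulVec, sub_mulVec, smul_mulVec, smul_mulVec, one_mulVec, one_mulVec, map_sub, map_smul]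
  linear_combination (norm := module) -h

/-- For a symmetric `J` and `J_d = (1/2)tr(J)·I − J`, one has
`x × (J_d y) + J_d (x × y) = (J x) × y` for all `x y`, and as matrices
`S_x J_d + J_d S_x = S_{Jx}`. -/
theorem hat_Jd_identity (J : Matrix (Fin 3) (Fin 3) ℝ) (hJ : Jᵀ = J)
    (Jd : Matrix (Fin 3) (Fin 3) ℝ) (hJd : Jd = (((1 : ℝ) / 2) * J.trace) • (1 : Matrix (Fin 3) (Fin 3) ℝ) - J) :
    (∀ x y : Fin 3 → ℝ,
      x ⨯₃ (Jd *ᵥ y) + Jd *ᵥ (x ⨯₃ y) = (J *ᵥ x) ⨯₃ y) ∧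
    (∀ x : Fin 3 → ℝ, hat x * Jd + Jd * hat x = hat (J *ᵥ x)) := by
  subst hJd
  have hvec := cross_mulVec_add_mulVec_cross_of_transpose_eq hJ
  refine ⟨hvec, fun x => ext_iff_mulVec.2 fun y => ?_⟩
  rw [add_mulVec, ← mulVec_mulVec, ← mulVec_mulVec, hat_mulVec, hat_mulVec, hat_mulVec, hvec]
end

section
/- Let J be a symmetric 3×3 real matrix, J_d = (1/2)tr(J)·I − J, and fix Ω ∈ ℝ³. Then the function h ↦ tr((I − exp(h·S_Ω)) J_d) − (h²/2)·ΩᵀJΩ is O(h⁴) as h → 0, where exp denotes the matrix exponential. In particular, the discrete kinetic energy term (1/h)tr((I − exp(h S_Ω))J_d) approximates h·(1/2)ΩᵀJΩ with a fourth-order error. -/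
open Matrix Asymptotics

/-! Taylor's formula `exp(h S) = I + h S + (h²/2) S² + (h³/6) S³ + O(h⁴)` reduces the claim to the
traces `tr(Sᵏ J_d)`, `k ≤ 3`. For odd `k`, `Sᵏ` is skew-symmetric and `J_d` symmetric, so the trace
vanishes; for `k = 2`, `S² = ΩΩᵀ - |Ω|² I` gives `tr(S² J_d) = ΩᵀJ_dΩ - |Ω|² tr J_d = -ΩᵀJΩ`. -/

open Finset Filter NormedSpace Topology Nat

section ExpTaylor

theorem expSeries_partialSum_smul {𝕂 𝔸 : Type*} [Field 𝕂] [Ring 𝔸] [Algebra 𝕂 𝔸]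
    [TopologicalSpace 𝔸] [IsTopologicalRing 𝔸] (t : 𝕂) (A : 𝔸) (n : ℕ) :
    (expSeries 𝕂 𝔸).partialSum n (t • A) = ∑ k ∈ range n, (t ^ k / k !) • A ^ k := by
  refine sum_congr rfl fun k _ => ?_
  rw [expSeries_apply_eq, smul_pow, smul_smul, inv_mul_eq_div]

variable {𝕂 𝔸 : Type*} [NontriviallyNormedField 𝕂] [CharZero 𝕂] [ContinuousSMul ℚ 𝕂]
  [NormedRing 𝔸] [NormedAlgebra 𝕂 𝔸] [CompleteSpace 𝔸]

theorem exp_smul_sub_sum_isBigO (A : 𝔸) (n : ℕ) :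
    (fun t : 𝕂 => exp (t • A) - ∑ k ∈ range n, (t ^ k / k !) • A ^ k) =O[𝓝 0]
      fun t => t ^ n := by
  have hA : Tendsto (fun t : 𝕂 => t • A) (𝓝 0) (𝓝 0) := by
    simpa using (tendsto_id (x := 𝓝 (0 : 𝕂))).smul_const A
  have taylor := ((exp_hasFPowerSeriesAt_zero (𝕂 := 𝕂) (𝔸 := 𝔸)).isBigO_sub_partialSum_pow
    n).comp_tendsto hA
  have hnorm : (fun t : 𝕂 => ‖t • A‖ ^ n) =O[𝓝 0] fun t => t ^ n :=
    IsBigO.of_bound (‖A‖ ^ n) (Eventually.of_forall fun t => by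
      simp [norm_smul, mul_pow, mul_comm])
  simpa [Function.comp_def, expSeries_partialSum_smul] using taylor.trans hnorm

end ExpTaylor

section TraceSkew

variable {n R : Type*} [Fintype n] [CommRing R] [IsAddTorsionFree R] {A B : Matrix n n R}

theorem Matrix.trace_mul_eq_zero_of_transpose_eq_neg (hA : Aᵀ = -A) (hB : Bᵀ = B) :
    (A * B).trace = 0 := by
  rw [← self_eq_neg]
  calc (A * B).trace = (A * B)ᵀ.trace := (trace_transpose _).symm
    _ = -(A * B).trace := by rw [transpose_mul, hA, hB, mul_neg, trace_neg, trace_mul_comm]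

theorem Matrix.trace_pow_mul_eq_zero_of_odd [DecidableEq n] (hA : Aᵀ = -A) (hB : Bᵀ = B)
    {k : ℕ} (hk : Odd k) : (A ^ k * B).trace = 0 :=
  trace_mul_eq_zero_of_transpose_eq_neg (by rw [transpose_pow, hA, hk.neg_pow]) hB

end TraceSkew

theorem hat_transpose (x : Fin 3 → ℝ) : (hat x)ᵀ = -hat x := by
  ext i j
  fin_cases i <;> fin_cases j <;> simp [hat]

theorem hat_sq (x : Fin 3 → ℝ) : hat x ^ 2 = vecMulVec x x - (x ⬝ᵥ x) • 1 := by
  ext i j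
  fin_cases i <;> fin_cases j <;>
    simp [hat, sq, mul_apply, Fin.sum_univ_three, vecMulVec_apply, dotProduct] <;> ring

theorem trace_hat_sq_mul (x : Fin 3 → ℝ) (M : Matrix (Fin 3) (Fin 3) ℝ) :
    (hat x ^ 2 * M).trace = x ⬝ᵥ (M *ᵥ x) - (x ⬝ᵥ x) * M.trace := by
  rw [hat_sq, sub_mul, vecMulVec_mul, smul_mul, one_mul, trace_sub, trace_vecMulVec, trace_smul,
    dotProduct_mulVec, dotProduct_comm, smul_eq_mul]

theorem trace_hat_sq_mul_Jd {J Jd : Matrix (Fin 3) (Fin 3) ℝ}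
    (hJd : Jd = (((1 : ℝ) / 2) * J.trace) • (1 : Matrix (Fin 3) (Fin 3) ℝ) - J) (x : Fin 3 → ℝ) :
    (hat x ^ 2 * Jd).trace = -(x ⬝ᵥ (J *ᵥ x)) := by
  rw [trace_hat_sq_mul, hJd]
  simp only [sub_mulVec, smul_mulVec, one_mulVec, dotProduct_sub, dotProduct_smul, trace_sub,
    trace_smul, trace_one, Fintype.card_fin, smul_eq_mul]
  push_cast
  ring

theorem trace_one_sub_expTaylor_hat_mul_Jd {J Jd : Matrix (Fin 3) (Fin 3) ℝ} (hJ : Jᵀ = J)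
    (hJd : Jd = (((1 : ℝ) / 2) * J.trace) • (1 : Matrix (Fin 3) (Fin 3) ℝ) - J) (x : Fin 3 → ℝ)
    (h : ℝ) :
    ((1 - ∑ k ∈ range 4, (h ^ k / k !) • hat x ^ k) * Jd).trace
      = h ^ 2 / 2 * (x ⬝ᵥ (J *ᵥ x)) := by
  have hJd_symm : Jdᵀ = Jd := by rw [hJd, transpose_sub, transpose_smul, transpose_one, hJ]
  have odd1 := trace_pow_mul_eq_zero_of_odd (hat_transpose x) hJd_symm odd_one
  have odd3 := trace_pow_mul_eq_zero_of_odd (hat_transpose x) hJd_symm (by decide : Odd 3)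
  simp only [sum_range_succ, range_zero, sum_empty, sub_mul, add_mul, smul_mul, trace_sub,
    trace_add, trace_smul, odd1, odd3, trace_hat_sq_mul_Jd hJd, pow_zero, one_mul, zero_add]
  norm_num

-- Any submultiplicative norm will do: `exp` itself does not depend on the choice.
attribute [local instance] Matrix.linftyOpNormedAddCommGroup Matrix.linftyOpNormedRing
  Matrix.linftyOpNormedAlgebra

/-- With `J` symmetric, `J_d = (1/2)tr(J)·I − J`, and `Ω ∈ ℝ³` fixed, the map
`h ↦ tr((I − exp(h·S_Ω)) J_d) − (h²/2)·ΩᵀJΩ` is `O(h⁴)` as `h → 0`. -/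
theorem trace_exp_hat_Jd_isBigO (J : Matrix (Fin 3) (Fin 3) ℝ) (hJ : Jᵀ = J)
    (Jd : Matrix (Fin 3) (Fin 3) ℝ)
    (hJd : Jd = (((1 : ℝ) / 2) * J.trace) • (1 : Matrix (Fin 3) (Fin 3) ℝ) - J)
    (Ω : Fin 3 → ℝ) :
    (fun h : ℝ =>
        ((1 - NormedSpace.exp (h • hat Ω)) * Jd).trace - h ^ 2 / 2 * (Ω ⬝ᵥ (J *ᵥ Ω)))
      =O[nhds 0] fun h : ℝ => h ^ 4 := by
  let traceMulJd : Matrix (Fin 3) (Fin 3) ℝ →L[ℝ] ℝ :=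
    ((traceLinearMap (Fin 3) ℝ ℝ).comp (LinearMap.mulRight ℝ Jd)).toContinuousLinearMap
  have taylor := (traceMulJd.isBigO_comp _ (𝓝 0)).trans
    (exp_smul_sub_sum_isBigO (𝕂 := ℝ) (hat Ω) 4)
  refine taylor.neg_left.congr_left fun h => ?_
  change -((exp (h • hat Ω) - _) * Jd).trace = _
  rw [← trace_one_sub_expTaylor_hat_mul_Jd hJ hJd Ω h]
  simp only [sub_mul, trace_sub]
  ring
end

section
/- Consider one step of the Lie group variational integrator on SE(3): let h, m ∈ ℝ, let R_k ∈ ℝ^{3×3}, F_k ∈ SO(3), x_k, v_k, Π_k ∈ ℝ³ (Π_k representing JΩ_k), and suppose x_{k+1} = x_k + h v_k, R_{k+1} = R_k F_k, Π_{k+1} = F_kᵀ Π_k + h M_{k+1}, and m v_{k+1} = m v_k − h f_{k+1}, where M_{k+1}, f_{k+1} ∈ ℝ³ satisfy the torque identity R_{k+1} M_{k+1} = x_{k+1} × f_{k+1}. Then the total spatial angular momentum is exactly preserved over the step: R_{k+1} Π_{k+1} + m·x_{k+1} × v_{k+1} = R_k Π_k + m·x_k × v_k. -/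
open Matrix

/-! The torque identity makes the spatial body momentum `R Π` gain exactly `h · x_{k+1} × f_{k+1}`
over the step, while the impulse `-h f_{k+1}` removes the same amount from the orbital part;
the drift `x ↦ x + h v` leaves `x × v` unchanged. -/

theorem Matrix.mul_mulVec_transpose_mulVec {n : Type*} [Fintype n] [DecidableEq n] {α : Type*}
    [CommRing α] {R F : Matrix n n α} (hF : Fᵀ * F = 1) (p : n → α) :
    (R * F) *ᵥ (Fᵀ *ᵥ p) = R *ᵥ p := by
  rw [mulVec_mulVec, Matrix.mul_assoc, mul_eq_one_comm.mp hF, Matrix.mul_one]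

theorem cross_add_smul_self {α : Type*} [CommRing α] (x v : Fin 3 → α) (h : α) :
    (x + h • v) ⨯₃ v = x ⨯₃ v := by
  rw [LinearMap.map_add₂, LinearMap.map_smul₂, cross_self, smul_zero, add_zero]

theorem se3_step_angular_momentum_general
    (h m : ℝ)
    (Rk Rk1 Fk : Matrix (Fin 3) (Fin 3) ℝ)
    (xk xk1 vk vk1 Pmk Pmk1 Mk1 fk1 : Fin 3 → ℝ)
    (hFk : Fkᵀ * Fk = 1)
    (hx : xk1 = xk + h • vk)
    (hR : Rk1 = Rk * Fk)
    (hPm : Pmk1 = Fkᵀ *ᵥ Pmk + h • Mk1)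
    (hv : m • vk1 = m • vk - h • fk1)
    (htorque : Rk1 *ᵥ Mk1 = xk1 ⨯₃ fk1) :
    Rk1 *ᵥ Pmk1 + m • (xk1 ⨯₃ vk1) = Rk *ᵥ Pmk + m • (xk ⨯₃ vk) := by
  have body : Rk1 *ᵥ Pmk1 = Rk *ᵥ Pmk + h • (xk1 ⨯₃ fk1) := by
    rw [hPm, mulVec_add, mulVec_smul, htorque, hR, mul_mulVec_transpose_mulVec hFk]
  have orbital : m • (xk1 ⨯₃ vk1) = m • (xk ⨯₃ vk) - h • (xk1 ⨯₃ fk1) := by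
    rw [← map_smul, hv, map_sub, map_smul, map_smul, hx, cross_add_smul_self]
  rw [body, orbital]
  abel

/-- One step of the Lie group variational integrator on SE(3) exactly
preserves the total spatial angular momentum `R Π + m·x × v`, provided the torque
identity `R_{k+1} M_{k+1} = x_{k+1} × f_{k+1}` holds. -/
theorem se3_step_angular_momentum
    (h m : ℝ)
    (Rk Rk1 Fk : Matrix (Fin 3) (Fin 3) ℝ)
    (xk xk1 vk vk1 Pmk Pmk1 Mk1 fk1 : Fin 3 → ℝ)
    (hFk : Fkᵀ * Fk = 1) (hFkdet : Fk.det = 1)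
    (hx : xk1 = xk + h • vk)
    (hR : Rk1 = Rk * Fk)
    (hPm : Pmk1 = Fkᵀ *ᵥ Pmk + h • Mk1)
    (hv : m • vk1 = m • vk - h • fk1)
    (htorque : Rk1 *ᵥ Mk1 = xk1 ⨯₃ fk1) :
    Rk1 *ᵥ Pmk1 + m • (xk1 ⨯₃ vk1) = Rk *ᵥ Pmk + m • (xk ⨯₃ vk) :=
  se3_step_angular_momentum_general h m Rk Rk1 Fk xk xk1 vk vk1 Pmk Pmk1 Mk1 fk1 hFk hx hR hPm hv
    htorque
end

section
/- Consider the free (uncontrolled) discrete dynamics of a dumbbell spacecraft in a central gravity field: let h, m, k ∈ ℝ with k = G·Mc·m/2, ρ¹, ρ² ∈ ℝ³, R_j ∈ SO(3), F_j ∈ SO(3), and x_j, v_j, Π_j ∈ ℝ³ satisfy, for each step j: x_{j+1} = x_j + h v_j; R_{j+1} = R_j F_j; Π_{j+1} = F_jᵀ Π_j + h M_{j+1}; and m v_{j+1} = m v_j − h f_{j+1}, where, writing z^q = x_{j+1} + R_{j+1}ρ^q and assuming z^q ≠ 0 for q = 1,2, the force gradient and moment are f_{j+1} = k·Σ_{q=1,2}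 z^q/‖z^q‖³ and M_{j+1} = k·Σ_{q=1,2} (R_{j+1}ᵀ z^q/‖z^q‖³) × ρ^q. Then the total spatial angular momentum R_j Π_j + m·x_j × v_j is the same for all j. -/
open Matrix

/-- The Euclidean norm of a vector in `ℝ³`. -/
noncomputable def enorm3 (v : Fin 3 → ℝ) : ℝ := Real.sqrt (v ⬝ᵥ v)

/-!
Rotations preserve the cross product, and `z^q − x_{j+1} = R_{j+1} ρ^q`, so the increment
`h R_{j+1} M_{j+1}` of the spatial rotational momentum is `x_{j+1} × h Σ_q c_q z^q` with
`c_q = k ‖z^q‖⁻³`: the torque about the origin of the gravitational impulse. This is exactly what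
the orbital momentum `m x × v` loses in the same step, because the drift `x_{j+1} = x_j + h v_j`
does not change `x × v_j`.
-/

section CrossProduct

variable {K : Type*} [CommRing K]

theorem cross_mulVec_mulVec (A : Matrix (Fin 3) (Fin 3) K) (a b : Fin 3 → K) :
    (A *ᵥ a) ⨯₃ (A *ᵥ b) = A.adjugateᵀ *ᵥ (a ⨯₃ b) := by
  funext i
  fin_cases i <;>
    simp [cross_apply, mulVec, dotProduct, adjugate_fin_three, Fin.sum_univ_three] <;> ring

theorem mulVec_cross_of_orthogonal {A : Matrix (Fin 3) (Fin 3) K} (hA : Aᵀ * A = 1)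
    (hdet : A.det = 1) (a b : Fin 3 → K) :
    A *ᵥ (a ⨯₃ b) = (A *ᵥ a) ⨯₃ (A *ᵥ b) := by
  have hadj : A.adjugate = Aᵀ := by
    calc A.adjugate = A.adjugate * (A * Aᵀ) := by rw [mul_eq_one_comm.mp hA, mul_one]
      _ = Aᵀ := by rw [← mul_assoc, adjugate_mul, hdet, one_smul, one_mul]
  rw [cross_mulVec_mulVec, hadj, transpose_transpose]

/-- The body-frame moment of a central force acting at the body point `p` of a body at `x`,
read in the spatial frame, is the force's torque about the origin. -/
theorem mulVec_cross_eq_cross_of_orthogonal {A : Matrix (Fin 3) (Fin 3) K} (hA : Aᵀ * A = 1)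
    (hdet : A.det = 1) (x p : Fin 3 → K) :
    A *ᵥ ((Aᵀ *ᵥ (x + A *ᵥ p)) ⨯₃ p) = x ⨯₃ (x + A *ᵥ p) := by
  rw [mulVec_cross_of_orthogonal hA hdet, mulVec_mulVec, mul_eq_one_comm.mp hA, one_mulVec,
    map_add, LinearMap.add_apply, map_add, cross_self, cross_self, zero_add, add_zero]

theorem mulVec_sum_cross_eq_cross_sum_of_orthogonal {ι : Type*} [Fintype ι]
    {A : Matrix (Fin 3) (Fin 3) K} (hA : Aᵀ * A = 1) (hdet : A.det = 1)
    (x : Fin 3 → K) (c : ι → K) (ρ : ι → Fin 3 → K) :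
    A *ᵥ ∑ q, (c q • (Aᵀ *ᵥ (x + A *ᵥ ρ q))) ⨯₃ ρ q = x ⨯₃ ∑ q, c q • (x + A *ᵥ ρ q) := by
  simp only [mulVec_sum, map_sum, map_smul, LinearMap.smul_apply, mulVec_smul,
    mulVec_cross_eq_cross_of_orthogonal hA hdet]

theorem rotational_add_orbital_momentum_step_eq {R R' F : Matrix (Fin 3) (Fin 3) K} {m h : K}
    {x x' v v' P P' τ f : Fin 3 → K} (hRF : R' * Fᵀ = R) (hx : x' = x + h • v)
    (hP : P' = Fᵀ *ᵥ P + τ) (hv : m • v' = m • v - f) (hτ : R' *ᵥ τ = x' ⨯₃ f) :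
    R' *ᵥ P' + m • (x' ⨯₃ v') = R *ᵥ P + m • (x ⨯₃ v) := by
  have hrot : R' *ᵥ P' = R *ᵥ P + x' ⨯₃ f := by
    rw [hP, mulVec_add, mulVec_mulVec, hRF, hτ]
  have horb : m • (x' ⨯₃ v') = m • (x ⨯₃ v) - x' ⨯₃ f := by
    rw [← map_smul, hv, map_sub, hx, map_smul, map_add, LinearMap.add_apply, map_smul,
      LinearMap.smul_apply, cross_self, smul_zero, add_zero]
  rw [hrot, horb]
  abel

end CrossProduct

theorem dumbbell_angular_momentum_conserved_general
    (h m k : ℝ) (ρ : Fin 2 → Fin 3 → ℝ)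
    (R F : ℕ → Matrix (Fin 3) (Fin 3) ℝ) (x v Pm : ℕ → Fin 3 → ℝ)
    (hR : ∀ j, (R j)ᵀ * R j = 1) (hRdet : ∀ j, (R j).det = 1)
    (hF : ∀ j, (F j)ᵀ * F j = 1)
    (hxup : ∀ j, x (j + 1) = x j + h • v j)
    (hRup : ∀ j, R (j + 1) = R j * F j)
    (hPup : ∀ j, Pm (j + 1) = (F j)ᵀ *ᵥ Pm j +
      h • (k • ∑ q : Fin 2,
        ((enorm3 (x (j + 1) + R (j + 1) *ᵥ ρ q) ^ 3)⁻¹ •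
          ((R (j + 1))ᵀ *ᵥ (x (j + 1) + R (j + 1) *ᵥ ρ q))) ⨯₃ ρ q))
    (hvup : ∀ j, m • v (j + 1) = m • v j -
      h • (k • ∑ q : Fin 2,
        (enorm3 (x (j + 1) + R (j + 1) *ᵥ ρ q) ^ 3)⁻¹ •
          (x (j + 1) + R (j + 1) *ᵥ ρ q))) :
    ∀ j, R j *ᵥ Pm j + m • (x j ⨯₃ v j) = R 0 *ᵥ Pm 0 + m • (x 0 ⨯₃ v 0) := by
  have step : ∀ j, R (j + 1) *ᵥ Pm (j + 1) + m • (x (j + 1) ⨯₃ v (j + 1))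
      = R j *ᵥ Pm j + m • (x j ⨯₃ v j) := fun j => by
    refine rotational_add_orbital_momentum_step_eq ?_ (hxup j) (hPup j) (hvup j) ?_
    · rw [hRup j, mul_assoc, mul_eq_one_comm.mp (hF j), mul_one]
    · rw [mulVec_smul, mulVec_smul, map_smul, map_smul,
        mulVec_sum_cross_eq_cross_sum_of_orthogonal (hR _) (hRdet _)]
  intro j
  induction j with
  | zero => rfl
  | succ n ih => rw [step n, ih]

/-- The free (uncontrolled) Lie group variational integrator for the
dumbbell spacecraft in a central gravity field conserves the total spatial angular
momentum `R_j Π_j + m·x_j × v_j`. -/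
theorem dumbbell_angular_momentum_conserved
    (h m k : ℝ) (ρ : Fin 2 → Fin 3 → ℝ)
    (R F : ℕ → Matrix (Fin 3) (Fin 3) ℝ) (x v Pm : ℕ → Fin 3 → ℝ)
    (hR : ∀ j, (R j)ᵀ * R j = 1) (hRdet : ∀ j, (R j).det = 1)
    (hF : ∀ j, (F j)ᵀ * F j = 1) (hFdet : ∀ j, (F j).det = 1)
    (hz : ∀ j (q : Fin 2), x (j + 1) + R (j + 1) *ᵥ ρ q ≠ 0)
    (hxup : ∀ j, x (j + 1) = x j + h • v j)
    (hRup : ∀ j, R (j + 1) = R j * F j)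
    (hPup : ∀ j, Pm (j + 1) = (F j)ᵀ *ᵥ Pm j +
      h • (k • ∑ q : Fin 2,
        ((enorm3 (x (j + 1) + R (j + 1) *ᵥ ρ q) ^ 3)⁻¹ •
          ((R (j + 1))ᵀ *ᵥ (x (j + 1) + R (j + 1) *ᵥ ρ q))) ⨯₃ ρ q))
    (hvup : ∀ j, m • v (j + 1) = m • v j -
      h • (k • ∑ q : Fin 2,
        (enorm3 (x (j + 1) + R (j + 1) *ᵥ ρ q) ^ 3)⁻¹ •
          (x (j + 1) + R (j + 1) *ᵥ ρ q))) :
    ∀ j, R j *ᵥ Pm j + m • (x j ⨯₃ v j) = R 0 *ᵥ Pm 0 + m • (x 0 ⨯₃ v 0) :=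
  dumbbell_angular_momentum_conserved_general h m k ρ R F x v Pm hR hRdet hF hxup hRup hPup hvup
end

section
/- Let h ≠ 0, M, m, g ∈ ℝ, d ∈ ℝ³, and let J_d be a symmetric 3×3 real matrix. Define the discrete Lagrangian of the 3D pendulum on a 2D cart by L_d(R_k, x_k, y_k, R_{k+1}, x_{k+1}, y_{k+1}) = (1/2h)(M+m)((x_{k+1}−x_k)² + (y_{k+1}−y_k)²) + (1/h)tr((I − R_kᵀR_{k+1})J_d) + (m/h)(x_{k+1}−x_k)·e₁ᵀ(R_{k+1}−R_k)d + (m/h)(y_{k+1}−y_k)·e₂ᵀ(R_{k+1}−R_k)d + (h/2)mg·e₃ᵀR_k d + (h/2)mg·e₃ᵀR_{k+1} d, for R_k, R_{k+1} ∈ ℝ^{3×3} and x_k, y_k, x_{k+1}, y_{k+1} ∈ ℝ. For θ ∈ ℝ, let Q_θ be the rotation about e₃ by angle θ (the matrix with rows (cos θ, −sin θ, 0), (sin θ, cos θ, 0), (0,0,1)), and let r_θ(x,y) = (x cos θ − y sin θ, x sin θ + y cos θ). Then L_d is invariant under the diagonal S¹ action: L_d(Q_θ R_k, r_θ(x_k,y_k),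 Q_θ R_{k+1}, r_θ(x_{k+1},y_{k+1})) = L_d(R_k, x_k, y_k, R_{k+1}, x_{k+1}, y_{k+1}) for every θ. -/
open Matrix

/-- Standard basis vectors of `ℝ³`. -/
def e₁ : Fin 3 → ℝ := ![1, 0, 0]
def e₂ : Fin 3 → ℝ := ![0, 1, 0]
def e₃ : Fin 3 → ℝ := ![0, 0, 1]

/-- The discrete Lagrangian of the 3D pendulum on a 2D cart. -/
noncomputable def Ld (h Mcart m g : ℝ) (d : Fin 3 → ℝ) (Jd : Matrix (Fin 3) (Fin 3) ℝ)
    (Rk : Matrix (Fin 3) (Fin 3) ℝ) (xk yk : ℝ)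
    (Rk1 : Matrix (Fin 3) (Fin 3) ℝ) (xk1 yk1 : ℝ) : ℝ :=
  (1 / (2 * h)) * (Mcart + m) * ((xk1 - xk) ^ 2 + (yk1 - yk) ^ 2)
    + (1 / h) * ((1 - Rkᵀ * Rk1) * Jd).trace
    + (m / h) * (xk1 - xk) * (e₁ ⬝ᵥ ((Rk1 - Rk) *ᵥ d))
    + (m / h) * (yk1 - yk) * (e₂ ⬝ᵥ ((Rk1 - Rk) *ᵥ d))
    + (h / 2) * m * g * (e₃ ⬝ᵥ (Rk *ᵥ d))
    + (h / 2) * m * g * (e₃ ⬝ᵥ (Rk1 *ᵥ d))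

/-- Rotation about `e₃` by angle `θ`. -/
noncomputable def Qrot (θ : ℝ) : Matrix (Fin 3) (Fin 3) ℝ :=
  !![Real.cos θ, -Real.sin θ, 0; Real.sin θ, Real.cos θ, 0; 0, 0, 1]

/-!
`Q_θ` is orthogonal, so `R_kᵀ R_{k+1}` and hence the rotational term are unchanged; it fixes
`e₃`, so the potential terms are unchanged; and it rotates the horizontal components of
`(R_{k+1} - R_k) d` by the same planar rotation `r_θ` that acts on the cart increments, so the
cart kinetic term and the coupling terms, both planar dot products, are unchanged.
-/

open Real

theorem planar_rotation_dot_rotation (θ a b u v : ℝ) :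
    (a * cos θ - b * sin θ) * (u * cos θ - v * sin θ)
      + (a * sin θ + b * cos θ) * (u * sin θ + v * cos θ) = a * u + b * v := by
  linear_combination (a * u + b * v) * sin_sq_add_cos_sq θ

theorem transpose_mul_mul_of_transpose_mul_self {n R : Type*} [Fintype n] [DecidableEq n]
    [CommSemiring R] {Q : Matrix n n R} (hQ : Qᵀ * Q = 1) (A B : Matrix n n R) :
    (Q * A)ᵀ * (Q * B) = Aᵀ * B := by
  rw [transpose_mul, Matrix.mul_assoc, ← Matrix.mul_assoc Qᵀ, hQ, Matrix.one_mul]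

theorem Qrot_transpose_mul_self (θ : ℝ) : (Qrot θ)ᵀ * Qrot θ = 1 := by
  ext i j
  fin_cases i <;> fin_cases j <;>
    simp [Qrot, mul_apply, Fin.sum_univ_three, one_apply, ← sq, mul_comm (sin θ)]

theorem e₁_dotProduct_Qrot_mulVec (θ : ℝ) (v : Fin 3 → ℝ) :
    e₁ ⬝ᵥ (Qrot θ *ᵥ v) = (e₁ ⬝ᵥ v) * cos θ - (e₂ ⬝ᵥ v) * sin θ := by
  simp only [dotProduct, e₁, e₂, mulVec, Qrot, of_apply, cons_val', cons_val_fin_one,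
    Fin.sum_univ_three, Fin.isValue, cons_val_zero, cons_val_one, cons_val, neg_mul, zero_mul,
    add_zero, one_mul, zero_add]
  ring

theorem e₂_dotProduct_Qrot_mulVec (θ : ℝ) (v : Fin 3 → ℝ) :
    e₂ ⬝ᵥ (Qrot θ *ᵥ v) = (e₁ ⬝ᵥ v) * sin θ + (e₂ ⬝ᵥ v) * cos θ := by
  simp only [dotProduct, e₁, e₂, mulVec, Qrot, of_apply, cons_val', cons_val_fin_one,
    Fin.sum_univ_three, Fin.isValue, cons_val_zero, cons_val_one, cons_val, neg_mul, zero_mul,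
    add_zero, one_mul, zero_add]
  ring

theorem e₃_dotProduct_Qrot_mulVec (θ : ℝ) (v : Fin 3 → ℝ) :
    e₃ ⬝ᵥ (Qrot θ *ᵥ v) = e₃ ⬝ᵥ v := by
  simp [e₃, Qrot, mulVec, dotProduct, Fin.sum_univ_three]

theorem Ld_S1_invariant_general (h Mcart m g : ℝ) (d : Fin 3 → ℝ)
    (Jd : Matrix (Fin 3) (Fin 3) ℝ) (θ : ℝ)
    (Rk Rk1 : Matrix (Fin 3) (Fin 3) ℝ) (xk yk xk1 yk1 : ℝ) :
    Ld h Mcart m g d Jd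
      (Qrot θ * Rk) (xk * Real.cos θ - yk * Real.sin θ) (xk * Real.sin θ + yk * Real.cos θ)
      (Qrot θ * Rk1) (xk1 * Real.cos θ - yk1 * Real.sin θ) (xk1 * Real.sin θ + yk1 * Real.cos θ)
      = Ld h Mcart m g d Jd Rk xk yk Rk1 xk1 yk1 := by
  unfold Ld
  rw [transpose_mul_mul_of_transpose_mul_self (Qrot_transpose_mul_self θ), ← Matrix.mul_sub,
    ← mulVec_mulVec, ← mulVec_mulVec d _ Rk, ← mulVec_mulVec d _ Rk1,
    e₁_dotProduct_Qrot_mulVec, e₂_dotProduct_Qrot_mulVec, e₃_dotProduct_Qrot_mulVec,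
    e₃_dotProduct_Qrot_mulVec]
  set Δx := xk1 - xk
  set Δy := yk1 - yk
  set w := (Rk1 - Rk) *ᵥ d
  have kinetic := planar_rotation_dot_rotation θ Δx Δy Δx Δy
  have coupling := planar_rotation_dot_rotation θ Δx Δy (e₁ ⬝ᵥ w) (e₂ ⬝ᵥ w)
  linear_combination (1 / (2 * h)) * (Mcart + m) * kinetic + (m / h) * coupling

/-- The discrete Lagrangian of the 3D pendulum on a 2D cart is invariant
under the diagonal `S¹` action rotating the pendulum attitude and the cart position
simultaneously about the gravity direction. -/
theorem Ld_S1_invariant (h Mcart m g : ℝ) (hh : h ≠ 0) (d : Fin 3 → ℝ)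
    (Jd : Matrix (Fin 3) (Fin 3) ℝ) (hJd : Jdᵀ = Jd) (θ : ℝ)
    (Rk Rk1 : Matrix (Fin 3) (Fin 3) ℝ) (xk yk xk1 yk1 : ℝ) :
    Ld h Mcart m g d Jd
      (Qrot θ * Rk) (xk * Real.cos θ - yk * Real.sin θ) (xk * Real.sin θ + yk * Real.cos θ)
      (Qrot θ * Rk1) (xk1 * Real.cos θ - yk1 * Real.sin θ) (xk1 * Real.sin θ + yk1 * Real.cos θ)
      = Ld h Mcart m g d Jd Rk xk yk Rk1 xk1 yk1 :=
  Ld_S1_invariant_general h Mcart m g d Jd θ Rk Rk1 xk yk xk1 yk1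
end
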